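/- For every nonnegative integer n, ∑_{i=0}^{n} Γ(n-i-1/2)Γ(n+i+3/2)/[Γ(n-i+1)Γ(n+i+3)] = −(1/2)·[Γ(n+1/2)/Γ(n+2)]². -/

import Mathlib

/-!
Writing `c k = C(2k, k) / ((2k - 1) 4^k)`, one has `Γ(k - 1/2) / Γ(k + 1) = 2√π c k`, so the
sum is `4π ∑_{i ≤ n} c (n - i) c (n + i + 2)`. Up to sign, `c k` is the coefficient of `x^k` in
`√(1 - x)`; as `(√(1 - x))² = 1 - x`, the convolution `∑_{j + l = 2n + 2} c j c l` vanishes. By the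
symmetry `j ↔ l` this convolution is twice our sum plus the middle term `(c (n + 1))²`, which gives
the value `-2π (c (n + 1))² = -(1/2) (Γ(n + 1/2) / Γ(n + 2))²`. The vanishing of the convolution
is the Catalan recursion, since `c (k + 1) = catalan k / (2 · 4^k)`.
-/

open Finset Real

noncomputable def sqrtCoeff (k : ℕ) : ℝ := k.centralBinom / ((2 * k - 1) * 4 ^ k)

lemma sqrtCoeff_zero : sqrtCoeff 0 = -1 := by simp [sqrtCoeff]

lemma two_mul_natCast_sub_one_ne_zero (k : ℕ) : (2 * k - 1 : ℝ) ≠ 0 := by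
  rw [sub_ne_zero]; exact_mod_cast (by omega : 2 * k ≠ 1)

lemma centralBinom_succ_eq_catalan (k : ℕ) :
    (k + 1).centralBinom = 2 * (2 * k + 1) * catalan k := by
  refine Nat.eq_of_mul_eq_mul_left (by omega : 0 < k + 1) ?_
  rw [Nat.succ_mul_centralBinom_succ, ← succ_mul_catalan_eq_centralBinom]
  ring

lemma sqrtCoeff_succ (k : ℕ) : sqrtCoeff (k + 1) = catalan k / (2 * 4 ^ k) := by
  have h : (2 * ((k + 1 : ℕ) : ℝ) - 1) = 2 * k + 1 := by push_cast; ring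
  rw [sqrtCoeff, h, centralBinom_succ_eq_catalan]
  push_cast
  field_simp
  ring

lemma succ_mul_sqrtCoeff_succ (k : ℕ) :
    (k + 1) * sqrtCoeff (k + 1) = (k - 1 / 2) * sqrtCoeff k := by
  have hk := two_mul_natCast_sub_one_ne_zero k
  rw [sqrtCoeff_succ, sqrtCoeff, ← succ_mul_catalan_eq_centralBinom]
  push_cast
  field_simp
  exact (mul_div_cancel_right₀ _ (by rwa [mul_comm] at hk)).symm

lemma Gamma_nat_sub_half_div_Gamma_nat_add_one (k : ℕ) :
    Gamma (k - 1 / 2) / Gamma (k + 1) = 2 * √π * sqrtCoeff k := by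
  induction k with
  | zero =>
    have h : Gamma (-(1 / 2) + 1) = -(1 / 2) * Gamma (-(1 / 2)) := Gamma_add_one (by norm_num)
    norm_num [Gamma_one_half_eq] at h
    norm_num [sqrtCoeff_zero]
    linarith
  | succ k ih =>
    have hk : (k : ℝ) - 1 / 2 ≠ 0 := by
      have := two_mul_natCast_sub_one_ne_zero k
      contrapose! this
      linarith
    have hk' : (k : ℝ) + 1 ≠ 0 := by positivity
    have e : ((k + 1 : ℕ) : ℝ) - 1 / 2 = (k - 1 / 2) + 1 := by push_cast; ring
    rw [e, Nat.cast_add_one, Gamma_add_one hk, Gamma_add_one hk', mul_div_mul_comm, ih]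
    rw [div_mul_eq_mul_div, div_eq_iff hk']
    linear_combination (-2 * √π) * succ_mul_sqrtCoeff_succ k

lemma sum_antidiagonal_even_eq_two_mul_sum_add_sq {R : Type*} [CommSemiring R] (g : ℕ → R) (n : ℕ) :
    ∑ p ∈ antidiagonal (2 * n + 2), g p.1 * g p.2
      = 2 * ∑ i ∈ range (n + 1), g (n - i) * g (n + i + 2) + g (n + 1) ^ 2 := by
  have hlow : ∑ k ∈ range (n + 1), g k * g (2 * n + 2 - k)
      = ∑ i ∈ range (n + 1), g (n - i) * g (n + i + 2) := by
    rw [← sum_range_reflect]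
    refine sum_congr rfl fun i hi => ?_
    have hi := mem_range.mp hi
    congr 2; omega
  have hhigh : ∑ i ∈ range (n + 1), g (n + 2 + i) * g (2 * n + 2 - (n + 2 + i))
      = ∑ i ∈ range (n + 1), g (n - i) * g (n + i + 2) := by
    refine sum_congr rfl fun i _ => ?_
    rw [mul_comm]
    congr 2 <;> omega
  rw [Nat.sum_antidiagonal_eq_sum_range_succ (fun i j => g i * g j),
    (by omega : (2 * n + 2).succ = n + 2 + (n + 1)), sum_range_add, sum_range_succ, hlow, hhigh,
    (by omega : 2 * n + 2 - (n + 1) = n + 1)]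
  ring

lemma sum_antidiagonal_sqrtCoeff_mul_sqrtCoeff (m : ℕ) :
    ∑ p ∈ antidiagonal (m + 2), sqrtCoeff p.1 * sqrtCoeff p.2 = 0 := by
  rw [Nat.sum_antidiagonal_succ, Nat.sum_antidiagonal_succ']
  have hmid : ∑ p ∈ antidiagonal m, sqrtCoeff (p.1 + 1) * sqrtCoeff (p.2 + 1)
      = catalan (m + 1) / (4 * 4 ^ m) := by
    rw [catalan_succ', Nat.cast_sum, sum_div]
    refine sum_congr rfl fun p hp => ?_
    rw [← mem_antidiagonal.mp hp, sqrtCoeff_succ, sqrtCoeff_succ, pow_add]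
    push_cast
    field_simp
    ring
  rw [hmid, sqrtCoeff_zero, sqrtCoeff_succ]
  field_simp
  ring

theorem gamma_sum_identity_14 (n : ℕ) :
    ∑ i ∈ Finset.range (n + 1),
      Real.Gamma ((n : ℝ) - i - 1/2) * Real.Gamma ((n : ℝ) + i + 3/2) /
        (Real.Gamma ((n : ℝ) - i + 1) * Real.Gamma ((n : ℝ) + i + 3)) =
      -(1/2) * (Real.Gamma ((n : ℝ) + 1/2) / Real.Gamma ((n : ℝ) + 2)) ^ 2 := by
  have hterm : ∀ i ∈ range (n + 1),
      Gamma ((n : ℝ) - i - 1/2) * Gamma ((n : ℝ) + i + 3/2) /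
        (Gamma ((n : ℝ) - i + 1) * Gamma ((n : ℝ) + i + 3))
        = 4 * π * (sqrtCoeff (n - i) * sqrtCoeff (n + i + 2)) := by
    intro i hi
    have hlow := Gamma_nat_sub_half_div_Gamma_nat_add_one (n - i)
    have hhigh := Gamma_nat_sub_half_div_Gamma_nat_add_one (n + i + 2)
    rw [Nat.cast_sub (mem_range_succ_iff.mp hi)] at hlow
    push_cast at hhigh
    rw [mul_div_mul_comm, hlow, (by ring : (n : ℝ) + i + 3 / 2 = n + i + 2 - 1 / 2),
      (by ring : (n : ℝ) + i + 3 = n + i + 2 + 1), hhigh]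
    linear_combination (4 * sqrtCoeff (n - i) * sqrtCoeff (n + i + 2)) * sq_sqrt pi_pos.le
  have hsum : ∑ i ∈ range (n + 1), sqrtCoeff (n - i) * sqrtCoeff (n + i + 2)
      = -sqrtCoeff (n + 1) ^ 2 / 2 := by
    have := sum_antidiagonal_even_eq_two_mul_sum_add_sq sqrtCoeff n
    rw [sum_antidiagonal_sqrtCoeff_mul_sqrtCoeff] at this
    linarith
  have hmid := Gamma_nat_sub_half_div_Gamma_nat_add_one (n + 1)
  push_cast at hmid
  rw [sum_congr rfl hterm, ← mul_sum, hsum, (by ring : (n : ℝ) + 1 / 2 = n + 1 - 1 / 2),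
    (by ring : (n : ℝ) + 2 = n + 1 + 1), hmid]
  linear_combination (2 * sqrtCoeff (n + 1) ^ 2) * sq_sqrt pi_pos.le
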